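/- arXiv:2404.08911 — 2 statements merged into one kernel-verified Lean document; each statement's English description precedes it below -/
import Mathlib

section
/- Let f be a nonzero pure meromorphic function of type q (a quadratic form in the variables), and define C_i^μ(f) = δ(x_{i+1}/x_i, μ)·f + δ(x_i/x_{i+1}, h)·s_i f, where δ(a,b) has type (log a)(log b). Then C_i^μ(f) has pure type (i.e., both summands have equal type) if and only if μ = ∂_i(q) - h, where ∂_i(q) = (q - s_i q)/(x_i - x_{i+1}). -/
/-!
Since `c ∘ swap i j - c = single i (c j - c i) + single j (c i - c j)`, the difference of the
two types is `single j d - single i d` with `d = μ - (c i - c j - h)`, and for `i ≠ j` this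
vanishes exactly when `d = 0`.
-/

namespace Pi

variable {ι P : Type*} [DecidableEq ι] [AddCommGroup P]

theorem comp_swap_sub_self (c : ι → P) (i j : ι) :
    c ∘ Equiv.swap i j - c = single i (c j - c i) + single j (c i - c j) := by
  funext k
  rcases eq_or_ne k i with rfl | hki
  · rcases eq_or_ne k j with rfl | hkj
    · simp
    · simp [hkj]
  · rcases eq_or_ne k j with rfl | hkj
    · simp [hki]
    · simp [hki, hkj, Equiv.swap_apply_of_ne_of_ne hki hkj]

theorem single_sub_single_eq_zero_iff {i j : ι} (hij : i ≠ j) {d : P} :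
    (single j d - single i d : ι → P) = 0 ↔ d = 0 := by
  refine ⟨fun h => ?_, fun h => by simp [h]⟩
  simpa [hij] using congrFun h j

theorem add_single_sub_single_eq_comp_swap_iff (c : ι → P) {i j : ι} (hij : i ≠ j) (μ h : P) :
    c + (single j μ - single i μ) = c ∘ Equiv.swap i j + (single i h - single j h) ↔
      μ = c i - c j - h := by
  have hdiff : c + (single j μ - single i μ) - (c ∘ Equiv.swap i j + (single i h - single j h)) =
      single j (μ - (c i - c j - h)) - single i (μ - (c i - c j - h)) := by
    rw [← sub_sub, add_sub_right_comm, ← neg_sub (c ∘ Equiv.swap i j), comp_swap_sub_self]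
    simp only [single_sub]
    abel
  rw [← sub_eq_zero, hdiff, single_sub_single_eq_zero_iff hij, sub_eq_zero]

end Pi

/-- Types are encoded by their coefficient vectors `c : Fin m → P`, where `P` is the additive
group of linear forms in `h` and the `μ`-variables; `s_i` acts by `c ↦ c ∘ swap i j`. -/
theorem purity_iff {P : Type*} [AddCommGroup P] {m : ℕ} (c : Fin m → P)
    (i j : Fin m) (hij : (i : ℕ) + 1 = (j : ℕ)) (μ h : P) :
    (c + (Pi.single j μ - Pi.single i μ) =
        (c ∘ Equiv.swap i j) + (Pi.single i h - Pi.single j h)) ↔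
      μ = (c i - c j) - h :=
  Pi.add_single_sub_single_eq_comp_swap_iff c (fun hEq => by subst hEq; omega) μ h
end

section
/- With the hypotheses of the purity lemma, if f has type q and μ = ∂_i(q) - h, then the type of C_i^μ(f) equals s_i(q - ρ_m h) + ρ_m h, where ρ_m = -Σ_{i=1}^m i·x_i. That is, admissible elliptic Demazure operators act on types as the permutation of coordinates after shifting the origin to ρ_m h. -/
/-- The coefficient vector of `ρ_m h`: the coefficient of `x_k` is `-(k+1)·h`. -/
def rhoH {P : Type*} [AddCommGroup P] {m : ℕ} (h : P) : Fin m → P :=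
  fun k => (-(((k : ℕ) + 1) : ℤ)) • h

section

variable {α P : Type*} [AddCommGroup P]

theorem comp_sub_add_eq_comp_add_sub_comp (σ : α → α) (c ρ : α → P) :
    (fun k => (c - ρ) (σ k)) + ρ = c ∘ σ + (ρ - ρ ∘ σ) := by
  funext k
  simp only [Pi.add_apply, Pi.sub_apply, Function.comp_apply]
  abel

theorem sub_comp_swap_eq_single_sub_single [DecidableEq α] (ρ : α → P) (i j : α) :
    ρ - ρ ∘ Equiv.swap i j = Pi.single i (ρ i - ρ j) - Pi.single j (ρ i - ρ j) := by
  funext k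
  rcases eq_or_ne k i with rfl | hki
  · by_cases hkj : k = j
    · subst hkj
      simp
    · simp [Pi.single_eq_of_ne hkj]
  · rcases eq_or_ne k j with rfl | hkj
    · simp [Pi.single_eq_of_ne hki]
    · simp [Equiv.swap_apply_of_ne_of_ne hki hkj, Pi.single_eq_of_ne hki,
        Pi.single_eq_of_ne hkj]

theorem rhoH_sub_rhoH_of_succ_eq {m : ℕ} (h : P) {i j : Fin m}
    (hij : (i : ℕ) + 1 = (j : ℕ)) : rhoH h i - rhoH h j = h := by
  simp only [rhoH, ← hij, ← sub_smul]
  push_cast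
  simp

end

/-- On `x`-coefficient vectors, `s_i` is precomposition with `Equiv.swap i j` (`j = i+1`) and
`(x_i - x_{i+1}) h` is `Pi.single i h - Pi.single j h`. -/
theorem type_of_admissible_demazure {P : Type*} [AddCommGroup P] {m : ℕ}
    (c : Fin m → P) (i j : Fin m) (hij : (i : ℕ) + 1 = (j : ℕ)) (h : P) :
    (c ∘ Equiv.swap i j) + (Pi.single i h - Pi.single j h) =
      (fun k => (c - rhoH h : Fin m → P) (Equiv.swap i j k)) + rhoH h := by
  rw [comp_sub_add_eq_comp_add_sub_comp, sub_comp_swap_eq_single_sub_single,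
    rhoH_sub_rhoH_of_succ_eq h hij]
end
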